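/- Let K be a field, n ≥ 2 an integer, and ζ ∈ K an element with ζ^n = −1. Suppose (x, y, s) ∈ K³ satisfies s ≠ 0 and s^n = f_n(x,y), where f_n(x,y) = (xy)^{n−1}(1−x)(1−y)(1−xy)^{n−1} (this forces x ≠ 0, y ≠ 0, x ≠ 1, y ≠ 1 and xy ≠ 1). Define x′ = 1 − x, y′ = 1/(1 − xy), and s′ = ζ(1−x)(1−y)x²y / (s(1−xy)). Then s′ ≠ 0 and s′^n = f_n(x′, y′); that is, the map A(x,y,s) = (x′, y′, s′) carries points of the surface E_n : s^n = f_n(x,y) with s ≠ 0 to points of the same kind. Moreover, writing Z(x,y,s) = (x, y, ζ^{−2}s), one has Z(A(Z(x,y,s))) = A(x,y,s) for every such point. -/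

import Mathlib

/-- The polynomial `f_n(x,y) = (xy)^{n-1}(1-x)(1-y)(1-xy)^{n-1}`. -/
def fpoly (n : ℕ) {K : Type*} [CommRing K] (x y : K) : K :=
  (x * y) ^ (n - 1) * (1 - x) * (1 - y) * (1 - x * y) ^ (n - 1)

/-- The symmetry `A` of the surface `E_n : s^n = f_n(x,y)`, where `ζ` plays
the role of a primitive `2n`-th root of unity:
`A(x,y,s) = (1-x, 1/(1-xy), ζ(1-x)(1-y)x²y/(s(1-xy)))`. -/
def Amap {K : Type*} [Field K] (ζ : K) (p : K × K × K) : K × K × K :=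
  (1 - p.1, 1 / (1 - p.1 * p.2.1),
    ζ * (1 - p.1) * (1 - p.2.1) * p.1 ^ 2 * p.2.1 / (p.2.2 * (1 - p.1 * p.2.1)))

/-- The symmetry `Z(x,y,s) = (x, y, ζ^{-2} s)`, where `ζ²` plays the role of
the `n`-th root of unity `ζ_n`. -/
def Zmap {K : Type*} [Field K] (ζ : K) (p : K × K × K) : K × K × K :=
  (p.1, p.2.1, ζ ^ (-2 : ℤ) * p.2.2)

/-! With `u = 1 - xy` and `(x', y') = (1 - x, 1/u)` one has `x'y' = (1 - x)/u`, `1 - x' = x`,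
`1 - y' = -xy/u` and `1 - x'y' = x(1 - y)/u`, so `f_n(x, y) f_n(x', y') = -w^n` with
`w = x²y(1 - x)(1 - y)/u`. Since `s' = ζw/s` and `ζ^n = -1`, this is `s'^n = f_n(x', y')`.
In `Z ∘ A ∘ Z` the factor `ζ⁻²` of the outer `Z` cancels the one that `A` moves into the
denominator of `s'`. -/

theorem fpoly_ne_zero_iff {K : Type*} [CommRing K] [IsDomain K] {n : ℕ} (hn : 2 ≤ n)
    (x y : K) :
    fpoly n x y ≠ 0 ↔ x ≠ 0 ∧ y ≠ 0 ∧ x ≠ 1 ∧ y ≠ 1 ∧ x * y ≠ 1 := by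
  have hn1 : n - 1 ≠ 0 := by omega
  simp only [fpoly, ne_eq, mul_eq_zero, pow_eq_zero_iff hn1, sub_eq_zero, not_or]
  tauto

theorem fpoly_mul_fpoly_one_sub {K : Type*} [Field K] {n : ℕ} (hn : n ≠ 0) {x y : K}
    (hxy : 1 - x * y ≠ 0) :
    fpoly n x y * fpoly n (1 - x) (1 / (1 - x * y))
      = -(x ^ 2 * y * (1 - x) * (1 - y) / (1 - x * y)) ^ n := by
  obtain ⟨m, rfl⟩ : ∃ m, n = m + 1 := ⟨n - 1, by omega⟩
  have h₁ : 1 - (1 - x) * (1 / (1 - x * y)) = x * (1 - y) / (1 - x * y) := by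
    field_simp; ring
  have h₂ : 1 - 1 / (1 - x * y) = -(x * y) / (1 - x * y) := by
    field_simp; ring
  rw [fpoly, fpoly, Nat.add_sub_cancel, h₁, h₂, sub_sub_cancel]
  simp only [mul_one_div, div_pow, mul_pow]
  field_simp
  ring

theorem Zmap_Amap_Zmap {K : Type*} [Field K] {ζ : K} (hζ : ζ ≠ 0) (p : K × K × K) :
    Zmap ζ (Amap ζ (Zmap ζ p)) = Amap ζ p := by
  simp only [Zmap, Amap, mul_assoc, mul_div_assoc', mul_div_mul_left _ _ (zpow_ne_zero _ hζ)]

/-- Sections 5.6 and 5.7 of the paper: the map `A` carries points of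
`E_n : s^n = f_n(x,y)` with `s ≠ 0` to points of the same kind (such points
automatically satisfy `x,y ≠ 0`, `x,y ≠ 1`, `xy ≠ 1`), and on such points the
relation `Z ∘ A ∘ Z = A` holds. -/
theorem surface_symmetry
    {K : Type*} [Field K] (n : ℕ) (hn : 2 ≤ n) (ζ : K) (hζ : ζ ^ n = -1)
    (x y s : K) (hs : s ≠ 0) (heq : s ^ n = fpoly n x y) :
    (x ≠ 0 ∧ y ≠ 0 ∧ x ≠ 1 ∧ y ≠ 1 ∧ x * y ≠ 1) ∧
    (Amap ζ (x, y, s)).2.2 ≠ 0 ∧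
    (Amap ζ (x, y, s)).2.2 ^ n
      = fpoly n (Amap ζ (x, y, s)).1 (Amap ζ (x, y, s)).2.1 ∧
    Zmap ζ (Amap ζ (Zmap ζ (x, y, s))) = Amap ζ (x, y, s) := by
  have hf : fpoly n x y ≠ 0 := heq ▸ pow_ne_zero n hs
  obtain ⟨hx, hy, hx1, hy1, hxy⟩ := (fpoly_ne_zero_iff hn x y).mp hf
  have hζ0 : ζ ≠ 0 := ne_zero_pow (n := n) (by omega) (by simp [hζ])
  have hu : 1 - x * y ≠ 0 := sub_ne_zero.mpr (Ne.symm hxy)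
  set w := x ^ 2 * y * (1 - x) * (1 - y) / (1 - x * y) with hw_def
  have hw : w ≠ 0 := div_ne_zero (by simp [sub_eq_zero, hx, hy, hx1.symm, hy1.symm]) hu
  have hs' : (Amap ζ (x, y, s)).2.2 = ζ * w / s := by
    simp only [Amap, hw_def]; field_simp
  refine ⟨⟨hx, hy, hx1, hy1, hxy⟩, ?_, ?_, Zmap_Amap_Zmap hζ0 _⟩
  · rw [hs']; exact div_ne_zero (mul_ne_zero hζ0 hw) hs
  · rw [hs', div_pow, mul_pow, hζ, heq, div_eq_iff hf, neg_one_mul,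
      ← fpoly_mul_fpoly_one_sub (by omega) hu, mul_comm]
    rfl
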